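/- arXiv:1508.02940 — 2 statements merged into one kernel-verified Lean document; each statement's English description precedes it below -/
import Mathlib

section
/- Let P, Q ⊆ ℝ^n be polytopes with P ∩ Q = ∅ and dim(conv(P ∪ Q)) = n. Then there exist h ∈ ℝ^n and α₁, α₂ ∈ ℝ with α₁ < α₂ such that P ⊆ {x ∈ ℝ^n : h^T x ≤ α₁}, Q ⊆ {x ∈ ℝ^n : h^T x ≥ α₂}, and max(|{x ∈ vert(P) : h^T x = α₁}|, |{x ∈ vert(Q) : h^T x = α₂}|) ≥ ⌈(n+1)/2⌉, where vert(·) denotes the set of vertices (extreme points) of a polytope. -/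
/-!
Separators `(f, α₁, α₂)` with `f ≤ α₁` on the vertices of `P` and `α₂ ≤ f` on the vertices of `Q`
form a polyhedral cone in `Dual ℝ E × ℝ × ℝ`, of dimension `n + 2` where `n = dim E`. Starting
from a strict separator (Hahn–Banach), move inside the cone with the gap `α₂ - α₁` fixed until a
vertex of this slice is reached. Since the vertices of `P` and `Q` affinely span the space, no
nonzero direction of the `(n + 1)`-dimensional slice keeps every constraint tight, so at a vertex
at least `n + 1` constraints are tight, and one of the two supporting hyperplanes carries at least
`⌈(n + 1) / 2⌉` vertices.
-/

open Module

section BasicSolution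

variable {V : Type*} [AddCommGroup V] [Module ℝ V]

/-- `y` is a vertex of the polyhedron `{z ∈ y + W | φ z ≤ 0 for all φ ∈ C}` when it is feasible:
the constraints tight at `y` pin down every direction in `W`. -/
def IsBasicSolution (C : Finset (V →ₗ[ℝ] ℝ)) (W : Submodule ℝ V) (y : V) : Prop :=
  ∀ v ∈ W, (∀ φ ∈ C, φ y = 0 → φ v = 0) → v = 0

theorem IsBasicSolution.finrank_le_card {C : Finset (V →ₗ[ℝ] ℝ)} {W : Submodule ℝ V} {y : V}
    (hy : IsBasicSolution C W y) : finrank ℝ W ≤ (C.filter (· y = 0)).card := by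
  set T := C.filter (· y = 0)
  let F : W →ₗ[ℝ] (T → ℝ) := LinearMap.pi fun φ => φ.1 ∘ₗ W.subtype
  have hF : Function.Injective F := by
    rw [← LinearMap.ker_eq_bot, Submodule.eq_bot_iff]
    intro w hw
    have hzero : ∀ φ ∈ T, φ w = 0 := fun φ hφ => congrFun (LinearMap.mem_ker.mp hw) ⟨φ, hφ⟩
    exact Subtype.ext <| hy w w.2 fun φ hφC hφy => hzero φ (Finset.mem_filter.mpr ⟨hφC, hφy⟩)
  simpa using LinearMap.finrank_le_finrank_of_injective hF

theorem exists_feasible_add_smul_tighter {C : Finset (V →ₗ[ℝ] ℝ)} {x d : V}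
    (hx : ∀ φ ∈ C, φ x ≤ 0) (hd : ∀ φ ∈ C, φ x = 0 → φ d = 0) (hpos : ∃ ψ ∈ C, 0 < ψ d) :
    ∃ t : ℝ, (∀ φ ∈ C, φ (x + t • d) ≤ 0) ∧
      C.filter (· (x + t • d) ≠ 0) ⊂ C.filter (· x ≠ 0) := by
  set J := C.filter (0 < · d)
  have hJ : J.Nonempty := by
    obtain ⟨ψ, hψC, hψ⟩ := hpos
    exact ⟨ψ, Finset.mem_filter.mpr ⟨hψC, hψ⟩⟩
  -- ratio test: stop at the first constraint that becomes tight along `d`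
  obtain ⟨ψ, hψJ, hψmin⟩ := J.exists_min_image (fun φ => -φ x / φ d) hJ
  obtain ⟨hψC, hψd⟩ := Finset.mem_filter.mp hψJ
  have hψx : ψ x ≠ 0 := fun h => hψd.ne' (hd ψ hψC h)
  have happly : ∀ φ : V →ₗ[ℝ] ℝ, ∀ t : ℝ, φ (x + t • d) = φ x + t * φ d := by simp
  refine ⟨-ψ x / ψ d, fun φ hφC => ?_, ?_⟩
  · rw [happly]
    rcases lt_or_ge 0 (φ d) with hφd | hφd
    · have hratio := (le_div_iff₀ hφd).mp (hψmin φ (Finset.mem_filter.mpr ⟨hφC, hφd⟩))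
      linarith
    · have ht : 0 ≤ -ψ x / ψ d := div_nonneg (by linarith [hx ψ hψC]) hψd.le
      nlinarith [hx φ hφC]
  · refine (Finset.ssubset_iff_of_subset fun φ hφ => ?_).mpr ⟨ψ, ?_, ?_⟩
    · obtain ⟨hφC, hφ⟩ := Finset.mem_filter.mp hφ
      refine Finset.mem_filter.mpr ⟨hφC, fun h => hφ ?_⟩
      rw [happly, h, hd φ hφC h, mul_zero, add_zero]
    · exact Finset.mem_filter.mpr ⟨hψC, hψx⟩
    · simp [happly, div_mul_cancel₀ _ hψd.ne']

theorem exists_isBasicSolution {C : Finset (V →ₗ[ℝ] ℝ)} {W : Submodule ℝ V}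
    (hC : ∀ v ∈ W, (∀ φ ∈ C, φ v = 0) → v = 0) {x : V} (hx : ∀ φ ∈ C, φ x ≤ 0) :
    ∃ y, (∀ φ ∈ C, φ y ≤ 0) ∧ y - x ∈ W ∧ IsBasicSolution C W y := by
  induction hk : (C.filter (· x ≠ 0)).card using Nat.strong_induction_on generalizing x with
  | _ k ih =>
  by_cases hbasic : IsBasicSolution C W x
  · exact ⟨x, hx, by simp, hbasic⟩
  obtain ⟨d, hdW, hd, hd0⟩ : ∃ d ∈ W, (∀ φ ∈ C, φ x = 0 → φ d = 0) ∧ d ≠ 0 := by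
    simpa [IsBasicSolution] using hbasic
  obtain ⟨e, heW, he, hpos⟩ : ∃ e ∈ W, (∀ φ ∈ C, φ x = 0 → φ e = 0) ∧ ∃ ψ ∈ C, 0 < ψ e := by
    obtain ⟨ψ, hψC, hψ⟩ : ∃ ψ ∈ C, ψ d ≠ 0 := by
      by_contra! h
      exact hd0 (hC d hdW h)
    rcases hψ.lt_or_gt with hneg | hpos
    · exact ⟨-d, W.neg_mem hdW, fun φ hφC h => by simp [hd φ hφC h], ψ, hψC, by simpa⟩
    · exact ⟨d, hdW, hd, ψ, hψC, hpos⟩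
  obtain ⟨t, hfeas, hlt⟩ := exists_feasible_add_smul_tighter hx he hpos
  obtain ⟨y, hy, hyW, hybasic⟩ := ih _ (hk ▸ Finset.card_lt_card hlt) hfeas rfl
  refine ⟨y, hy, ?_, hybasic⟩
  simpa [sub_add_eq_sub_sub, sub_add_cancel] using W.add_mem hyW (W.smul_mem t heW)

end BasicSolution

theorem LinearMap.eq_zero_of_forall_eq_of_affineSpan_eq_top {k E : Type*} [Ring k]
    [AddCommGroup E] [Module k E] {s : Set E} (hs : affineSpan k s = ⊤) {f : E →ₗ[k] k} {c : k}
    (hf : ∀ x ∈ s, f x = c) : f = 0 ∧ c = 0 := by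
  have hconst : f.toAffineMap = AffineMap.const k E c := AffineMap.ext_on hs hf
  have hc : c = 0 := by simpa using (congrArg (· 0) hconst).symm
  refine ⟨LinearMap.ext fun x => ?_, hc⟩
  simpa [hc] using congrArg (· x) hconst

namespace PolytopeSeparation

variable {E : Type*} [AddCommGroup E] [Module ℝ E]

/-! A point `(f, α₁, α₂)` of `Dual ℝ E × ℝ × ℝ` encodes the half-spaces `f ≤ α₁` and `α₂ ≤ f`. -/

def lower (p : E) : Dual ℝ E × ℝ × ℝ →ₗ[ℝ] ℝ :=
  Dual.eval ℝ E p ∘ₗ LinearMap.fst _ _ _ - LinearMap.fst ℝ ℝ ℝ ∘ₗ LinearMap.snd _ _ _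

def upper (q : E) : Dual ℝ E × ℝ × ℝ →ₗ[ℝ] ℝ :=
  LinearMap.snd ℝ ℝ ℝ ∘ₗ LinearMap.snd _ _ _ - Dual.eval ℝ E q ∘ₗ LinearMap.fst _ _ _

def gap : Dual ℝ E × ℝ × ℝ →ₗ[ℝ] ℝ :=
  (LinearMap.snd ℝ ℝ ℝ - LinearMap.fst ℝ ℝ ℝ) ∘ₗ LinearMap.snd _ _ _

@[simp] theorem lower_apply (p : E) (v : Dual ℝ E × ℝ × ℝ) : lower p v = v.1 p - v.2.1 := rfl

@[simp] theorem upper_apply (q : E) (v : Dual ℝ E × ℝ × ℝ) : upper q v = v.2.2 - v.1 q := rfl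

@[simp] theorem gap_apply (v : Dual ℝ E × ℝ × ℝ) : gap v = v.2.2 - v.2.1 := rfl

open Classical in
noncomputable def constraints (SP SQ : Finset E) : Finset (Dual ℝ E × ℝ × ℝ →ₗ[ℝ] ℝ) :=
  SP.image lower ∪ SQ.image upper

theorem forall_mem_constraints {SP SQ : Finset E} {p : (Dual ℝ E × ℝ × ℝ →ₗ[ℝ] ℝ) → Prop} :
    (∀ φ ∈ constraints SP SQ, p φ) ↔ (∀ x ∈ SP, p (lower x)) ∧ ∀ x ∈ SQ, p (upper x) := by
  simp [constraints, or_imp, forall_and]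

theorem finrank_ker_gap [FiniteDimensional ℝ E] :
    finrank ℝ (LinearMap.ker (gap : Dual ℝ E × ℝ × ℝ →ₗ[ℝ] ℝ)) = finrank ℝ E + 1 := by
  have hrange : LinearMap.range (gap : Dual ℝ E × ℝ × ℝ →ₗ[ℝ] ℝ) = ⊤ :=
    LinearMap.range_eq_top.mpr fun t => ⟨(0, 0, t), by simp⟩
  have := LinearMap.finrank_range_add_finrank_ker (gap : Dual ℝ E × ℝ × ℝ →ₗ[ℝ] ℝ)
  rw [hrange, finrank_top, finrank_self, finrank_prod, finrank_prod, finrank_self,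
    Subspace.dual_finrank_eq] at this
  omega

theorem eq_zero_of_mem_ker_gap {SP SQ : Finset E} (hspan : affineSpan ℝ (↑SP ∪ ↑SQ : Set E) = ⊤)
    {v : Dual ℝ E × ℝ × ℝ} (hv : v ∈ LinearMap.ker gap)
    (htight : ∀ φ ∈ constraints SP SQ, φ v = 0) : v = 0 := by
  obtain ⟨f, a, b⟩ := v
  obtain ⟨hP, hQ⟩ := forall_mem_constraints.mp htight
  have hab : b = a := by simpa [sub_eq_zero] using hv
  subst hab
  have hconst : ∀ x ∈ (↑SP ∪ ↑SQ : Set E), f x = b := by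
    rintro x (hx | hx)
    · simpa [sub_eq_zero] using hP x hx
    · exact (sub_eq_zero.mp (hQ x hx)).symm
  obtain ⟨rfl, rfl⟩ := LinearMap.eq_zero_of_forall_eq_of_affineSpan_eq_top hspan hconst
  rfl

theorem card_filter_constraints_le (SP SQ : Finset E) (v : Dual ℝ E × ℝ × ℝ) :
    ((constraints SP SQ).filter (· v = 0)).card ≤
      (SP.filter (v.1 · = v.2.1)).card + (SQ.filter (v.1 · = v.2.2)).card := by
  classical
  rw [constraints, Finset.filter_union, Finset.filter_image, Finset.filter_image]
  refine (Finset.card_union_le _ _).trans (add_le_add (Finset.card_image_le.trans ?_)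
    (Finset.card_image_le.trans ?_)) <;>
  simp only [lower_apply, upper_apply, sub_eq_zero, eq_comm (a := v.2.2), le_refl]

theorem exists_separator_with_tight_points [FiniteDimensional ℝ E] {SP SQ : Finset E}
    (hspan : affineSpan ℝ (↑SP ∪ ↑SQ : Set E) = ⊤) {v₀ : Dual ℝ E × ℝ × ℝ}
    (hv₀ : ∀ φ ∈ constraints SP SQ, φ v₀ ≤ 0) :
    ∃ v : Dual ℝ E × ℝ × ℝ, (∀ φ ∈ constraints SP SQ, φ v ≤ 0) ∧ gap v = gap v₀ ∧
      finrank ℝ E + 1 ≤ (SP.filter (v.1 · = v.2.1)).card + (SQ.filter (v.1 · = v.2.2)).card := by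
  obtain ⟨v, hv, hvv₀, hbasic⟩ :=
    exists_isBasicSolution (fun w hw => eq_zero_of_mem_ker_gap hspan hw) hv₀
  refine ⟨v, hv, sub_eq_zero.mp ((map_sub gap v v₀).symm.trans hvv₀), ?_⟩
  calc finrank ℝ E + 1 = finrank ℝ (LinearMap.ker gap) := finrank_ker_gap.symm
    _ ≤ _ := hbasic.finrank_le_card
    _ ≤ _ := card_filter_constraints_le SP SQ v

end PolytopeSeparation

theorem exists_finset_coe_eq_extremePoints {E : Type*} [NormedAddCommGroup E] [NormedSpace ℝ E]
    {P : Set E} (hP : ∃ S : Finset E, P = convexHull ℝ ↑S) :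
    ∃ F : Finset E, ↑F = P.extremePoints ℝ ∧ convexHull ℝ ↑F = P := by
  obtain ⟨S, rfl⟩ := hP
  have hfin := S.finite_toSet.subset (extremePoints_convexHull_subset (𝕜 := ℝ))
  refine ⟨hfin.toFinset, hfin.coe_toFinset, ?_⟩
  simpa [hfin.coe_toFinset, (hfin.isClosed_convexHull ℝ).closure_eq] using
    closure_convexHull_extremePoints (S.finite_toSet.isCompact_convexHull ℝ) (convex_convexHull ℝ _)

open PolytopeSeparation in
theorem exists_separation_with_large_face {E : Type*} [NormedAddCommGroup E] [NormedSpace ℝ E]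
    [FiniteDimensional ℝ E] {P Q : Set E} (hP : ∃ S : Finset E, P = convexHull ℝ ↑S)
    (hQ : ∃ S : Finset E, Q = convexHull ℝ ↑S) (hPQ : Disjoint P Q)
    (hspan : affineSpan ℝ (P ∪ Q) = ⊤) :
    ∃ (f : Dual ℝ E) (α₁ α₂ : ℝ), α₁ < α₂ ∧ (∀ x ∈ P, f x ≤ α₁) ∧ (∀ x ∈ Q, α₂ ≤ f x) ∧
      (finrank ℝ E + 2) / 2 ≤
        max {x ∈ P.extremePoints ℝ | f x = α₁}.ncard {x ∈ Q.extremePoints ℝ | f x = α₂}.ncard := by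
  obtain ⟨FP, hFP, rfl⟩ := exists_finset_coe_eq_extremePoints hP
  obtain ⟨FQ, hFQ, rfl⟩ := exists_finset_coe_eq_extremePoints hQ
  have hspan' : affineSpan ℝ (↑FP ∪ ↑FQ : Set E) = ⊤ := by
    refine eq_top_iff.mpr (hspan ▸ ?_)
    rw [← affineSpan_convexHull (↑FP ∪ ↑FQ : Set E)]
    exact affineSpan_mono ℝ (Set.union_subset (convexHull_mono Set.subset_union_left)
      (convexHull_mono Set.subset_union_right))
  obtain ⟨f, u, w, hfu, huw, hwf⟩ := geometric_hahn_banach_compact_closed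
    (convex_convexHull ℝ _) (FP.finite_toSet.isCompact_convexHull ℝ) (convex_convexHull ℝ _)
    (FQ.finite_toSet.isCompact_convexHull ℝ).isClosed hPQ
  have hv₀ : ∀ φ ∈ constraints FP FQ, φ ((f : Dual ℝ E), u, w) ≤ 0 := by
    refine forall_mem_constraints.mpr ⟨fun x hx => ?_, fun x hx => ?_⟩
    · simpa using (hfu x (subset_convexHull ℝ _ hx)).le
    · simpa using (hwf x (subset_convexHull ℝ _ hx)).le
  obtain ⟨⟨g, α₁, α₂⟩, hv, hgap, hcard⟩ := exists_separator_with_tight_points hspan' hv₀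
  obtain ⟨hgP, hgQ⟩ := forall_mem_constraints.mp hv
  refine ⟨g, α₁, α₂, by simp at hgap; linarith, ?_, ?_, ?_⟩
  · exact convexHull_min (t := g ⁻¹' Set.Iic α₁) (fun x hx => by simpa using hgP x hx)
      ((convex_Iic α₁).linear_preimage g)
  · exact convexHull_min (t := g ⁻¹' Set.Ici α₂) (fun x hx => by simpa using hgQ x hx)
      ((convex_Ici α₂).linear_preimage g)
  · simp only [← hFP, ← hFQ, Finset.mem_coe, ← Finset.coe_filter, Set.ncard_coe_finset]
    dsimp only at hcard
    omega

/-- **Separation of disjoint polytopes with a face spanned by many vertices.**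
If `P, Q ⊆ ℝⁿ` are disjoint polytopes with `dim conv(P ∪ Q) = n` (encoded as the affine
span of `P ∪ Q` being all of `ℝⁿ`), then there are `h ∈ ℝⁿ` and `α₁ < α₂` with
`P ⊆ {hᵀx ≤ α₁}`, `Q ⊆ {hᵀx ≥ α₂}`, and at least `⌈(n+1)/2⌉` vertices (extreme points)
of `P` lying on `{hᵀx = α₁}` or at least `⌈(n+1)/2⌉` vertices of `Q` lying on
`{hᵀx = α₂}`. -/
theorem separation_with_large_face
    (n : ℕ) (P Q : Set (Fin n → ℝ))
    (hP : ∃ S : Finset (Fin n → ℝ), P = convexHull ℝ (S : Set (Fin n → ℝ)))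
    (hQ : ∃ S : Finset (Fin n → ℝ), Q = convexHull ℝ (S : Set (Fin n → ℝ)))
    (hdisj : P ∩ Q = ∅)
    (hdim : affineSpan ℝ (P ∪ Q) = ⊤) :
    ∃ (h : Fin n → ℝ) (α₁ α₂ : ℝ), α₁ < α₂ ∧
      (∀ x ∈ P, ∑ i, h i * x i ≤ α₁) ∧
      (∀ x ∈ Q, α₂ ≤ ∑ i, h i * x i) ∧
      (n + 2) / 2 ≤
        max ({x ∈ P.extremePoints ℝ | ∑ i, h i * x i = α₁}.ncard)
            ({x ∈ Q.extremePoints ℝ | ∑ i, h i * x i = α₂}.ncard) := by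
  obtain ⟨f, α₁, α₂, hlt, hfP, hfQ, hcard⟩ :=
    exists_separation_with_large_face hP hQ (Set.disjoint_iff_inter_eq_empty.mpr hdisj) hdim
  have hf : ∀ x, ∑ i, f (fun j => if i = j then 1 else 0) * x i = f x := fun x => by
    simp [LinearMap.pi_apply_eq_sum_univ f x, mul_comm]
  refine ⟨fun i => f (fun j => if i = j then 1 else 0), α₁, α₂, hlt, ?_, ?_, ?_⟩ <;>
    simp only [hf]
  · exact hfP
  · exact hfQ
  · simpa using hcard
end

section
/- For every n ≥ 1, conv({x ∈ [0,1]^n : (1/2)·(x₁ + x₂ + … + x_n) ∈ ℤ}) = conv({x ∈ {0,1}^n : x₁ + … + x_n is even}); in particular, the set on the left is an integral polytope, equal to the n-dimensional even parity polytope. -/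
/-!
For an integer `m`, the slice `{x ∈ [0,1]ⁿ | ∑ xᵢ = m}` of the cube is compact and convex, so by
Krein–Milman it is the convex hull of its extreme points. An extreme point has no fractional
coordinate: a single one is impossible because the sum is an integer, and two fractional
coordinates `i ≠ j` allow moving both ways along `eᵢ - eⱼ` inside the slice. Hence each point of
`[0,1]ⁿ` with even integer sum `2z` is a convex combination of 0-1 vectors with sum `2z`.
-/

open Set

theorem Finset.exists_sum_eq_natCast_of_eq_zero_or_eq_one {ι R : Type*} [AddCommMonoidWithOne R]
    {s : Finset ι} {x : ι → R} (h : ∀ i ∈ s, x i = 0 ∨ x i = 1) : ∃ N : ℕ, ∑ i ∈ s, x i = N := by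
  classical
  refine ⟨(s.filter (x · = 1)).card, ?_⟩
  rw [natCast_card_filter]
  refine sum_congr rfl fun i hi => ?_
  rcases h i hi with h | h <;> simp [h]

theorem exists_pos_add_sub_mem_Icc {a b : ℝ} (ha : a ∈ Ioo 0 1) (hb : b ∈ Ioo 0 1) :
    ∃ ε > 0, ∀ t, |t| ≤ ε → a + t ∈ Icc 0 1 ∧ b - t ∈ Icc 0 1 := by
  refine ⟨min (min a (1 - a)) (min b (1 - b)), ?_, fun t ht => ?_⟩
  · simp only [gt_iff_lt, lt_min_iff, sub_pos]
    exact ⟨ha, hb⟩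
  · simp only [abs_le, le_min_iff] at ht
    obtain ⟨⟨⟨ha₀, ha₁⟩, hb₀, hb₁⟩, ⟨ha₀', ha₁'⟩, hb₀', hb₁'⟩ := ht
    exact ⟨⟨by linarith, by linarith⟩, by linarith, by linarith⟩

section Hypersimplex

variable {ι : Type*} [Fintype ι]

def hypersimplex (m : ℝ) : Set (ι → ℝ) :=
  univ.pi (fun _ => Icc 0 1) ∩ {x | ∑ i, x i = m}

theorem convex_hypersimplex (m : ℝ) : Convex ℝ (hypersimplex (ι := ι) m) :=
  (convex_pi fun _ _ => convex_Icc 0 1).inter <| convex_hyperplane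
    ⟨fun _ _ => Finset.sum_add_distrib, fun _ _ => (Finset.mul_sum _ _ _).symm⟩ m

theorem isCompact_hypersimplex (m : ℝ) : IsCompact (hypersimplex (ι := ι) m) :=
  (isCompact_univ_pi fun _ => isCompact_Icc).inter_right <|
    isClosed_eq (continuous_finsetSum _ fun i _ => continuous_apply i) continuous_const

theorem exists_ne_mem_Ioo_of_mem_hypersimplex {m : ℤ} {x : ι → ℝ}
    (hx : x ∈ hypersimplex (m : ℝ)) {i : ι} (hi : x i ∈ Ioo 0 1) : ∃ j ≠ i, x j ∈ Ioo 0 1 := by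
  classical
  by_contra! h
  obtain ⟨hcube, hsum⟩ := hx
  have hrest : ∀ j ∈ Finset.univ.erase i, x j = 0 ∨ x j = 1 := fun j hj =>
    (eq_endpoints_or_mem_Ioo_of_mem_Icc (hcube j (mem_univ j))).imp_right
      (·.resolve_right (h j (Finset.ne_of_mem_erase hj)))
  obtain ⟨N, hN⟩ := Finset.exists_sum_eq_natCast_of_eq_zero_or_eq_one hrest
  have hxi : x i = ((m - N : ℤ) : ℝ) := by
    have := Finset.add_sum_erase Finset.univ x (Finset.mem_univ i)
    push_cast
    linarith [hsum.out]
  have hpos : 0 < m - N := by exact_mod_cast hxi ▸ hi.1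
  have hlt : m - N < 1 := by exact_mod_cast hxi ▸ hi.2
  omega

theorem add_smul_single_sub_single_mem_hypersimplex [DecidableEq ι] {m : ℝ} {x : ι → ℝ}
    (hx : x ∈ hypersimplex m) {i j : ι} (hij : i ≠ j) {t : ℝ}
    (hi : x i + t ∈ Icc 0 1) (hj : x j - t ∈ Icc 0 1) :
    x + t • (Pi.single i 1 - Pi.single j 1) ∈ hypersimplex m := by
  refine ⟨fun k _ => ?_, ?_⟩
  · rcases eq_or_ne k i with rfl | hki
    · simpa [hij] using hi
    rcases eq_or_ne k j with rfl | hkj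
    · simpa [hki, sub_eq_add_neg] using hj
    simpa [hki, hkj] using hx.1 k (mem_univ k)
  · simp only [mem_ofPred_eq, Pi.add_apply, Pi.smul_apply, Pi.sub_apply, smul_eq_mul,
      Finset.sum_add_distrib, ← Finset.mul_sum, Finset.sum_sub_distrib, Finset.sum_pi_single',
      Finset.mem_univ, if_true, sub_self, mul_zero, add_zero]
    exact hx.2

theorem eq_zero_or_eq_one_of_mem_extremePoints_hypersimplex {m : ℤ} {x : ι → ℝ}
    (hx : x ∈ (hypersimplex (m : ℝ)).extremePoints ℝ) (i : ι) : x i = 0 ∨ x i = 1 := by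
  classical
  obtain h | h | hi := eq_endpoints_or_mem_Ioo_of_mem_Icc (hx.1.1 i (mem_univ i))
  · exact .inl h
  · exact .inr h
  obtain ⟨j, hji, hj⟩ := exists_ne_mem_Ioo_of_mem_hypersimplex hx.1 hi
  obtain ⟨ε, hε, hεt⟩ := exists_pos_add_sub_mem_Icc hi hj
  have hmem : ∀ t, |t| ≤ ε → x + t • (Pi.single i 1 - Pi.single j 1) ∈ hypersimplex (m : ℝ) :=
    fun t ht => add_smul_single_sub_single_mem_hypersimplex hx.1 hji.symm (hεt t ht).1 (hεt t ht).2
  have hplus := hmem ε (abs_of_pos hε).le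
  have hminus := hmem (-ε) (abs_neg ε ▸ abs_of_pos hε).le
  rw [neg_smul, ← sub_eq_add_neg] at hminus
  have hv := ((mem_extremePoints.1 hx).2 _ hplus _ hminus (mem_openSegment_add_sub (𝕜 := ℝ) _ _)).1
  have hε0 : ε = 0 := by simpa [hji.symm] using congr_fun hv i
  exact absurd hε0 hε.ne'

theorem hypersimplex_subset_convexHull (m : ℤ) :
    hypersimplex (m : ℝ) ⊆
      convexHull ℝ {x : ι → ℝ | (∀ i, x i = 0 ∨ x i = 1) ∧ ∑ i, x i = m} := by
  set V := {x : ι → ℝ | (∀ i, x i = 0 ∨ x i = 1) ∧ ∑ i, x i = m}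
  have hV : V.Finite := (Set.Finite.pi fun _ => toFinite ({0, 1} : Set ℝ)).subset
    fun x hx => mem_univ_pi.2 hx.1
  calc hypersimplex (m : ℝ)
      = closure (convexHull ℝ ((hypersimplex (m : ℝ)).extremePoints ℝ)) :=
        (closure_convexHull_extremePoints (isCompact_hypersimplex _) (convex_hypersimplex _)).symm
    _ ⊆ closure (convexHull ℝ V) := closure_mono <| convexHull_mono fun x hx =>
        ⟨eq_zero_or_eq_one_of_mem_extremePoints_hypersimplex hx, hx.1.2⟩
    _ = convexHull ℝ V := (hV.isClosed_convexHull (𝕜 := ℝ)).closure_eq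

end Hypersimplex

theorem parity_polytope_mixed_integer_description_general
    (n : ℕ) :
    convexHull ℝ {x : Fin n → ℝ |
        (∀ i, 0 ≤ x i ∧ x i ≤ 1) ∧
        ∃ z : ℤ, (1 / 2 : ℝ) * ∑ i, x i = (z : ℝ)}
      = convexHull ℝ {x : Fin n → ℝ |
        (∀ i, x i = 0 ∨ x i = 1) ∧
        ∃ z : ℤ, ∑ i, x i = 2 * (z : ℝ)} := by
  refine Subset.antisymm (convexHull_min ?_ (convex_convexHull ℝ _)) (convexHull_mono ?_)
  · rintro x ⟨hx, z, hz⟩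
    have hsum : ∑ i, x i = ((2 * z : ℤ) : ℝ) := by push_cast; linarith
    refine convexHull_mono ?_ (hypersimplex_subset_convexHull (2 * z) ⟨mem_univ_pi.2 hx, hsum⟩)
    rintro y ⟨hy, hys⟩
    exact ⟨hy, z, by rw [hys]; push_cast; ring⟩
  · rintro x ⟨hx, z, hz⟩
    exact ⟨fun i => by rcases hx i with h | h <;> simp [h], z, by rw [hz]; ring⟩

/-- **Mixed integer description of the parity polytope.** For every `n ≥ 1`,
`conv {x ∈ [0,1]ⁿ : (1/2)·∑ᵢ xᵢ ∈ ℤ}` equals the `n`-dimensional even parity polytope,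
i.e. the convex hull of the 0-1 vectors whose coordinate sum is even; in particular the
left-hand set is an integral polytope. -/
theorem parity_polytope_mixed_integer_description
    (n : ℕ) (hn : 1 ≤ n) :
    convexHull ℝ {x : Fin n → ℝ |
        (∀ i, 0 ≤ x i ∧ x i ≤ 1) ∧
        ∃ z : ℤ, (1 / 2 : ℝ) * ∑ i, x i = (z : ℝ)}
      = convexHull ℝ {x : Fin n → ℝ |
        (∀ i, x i = 0 ∨ x i = 1) ∧
        ∃ z : ℤ, ∑ i, x i = 2 * (z : ℝ)} :=
  parity_polytope_mixed_integer_description_general n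
end
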